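/- Let R be a commutative semiring such that the polynomial semiring R[X] is c-Noetherian (every congruence on R[X] is finitely generated). Then R is a ring, and moreover a Noetherian ring. -/

import Mathlib

/-!
If `1` has no additive inverse in `R`, an ideal `P` maximal among those disjoint from `1 + R` is
prime and contains both summands of each of its sums, so `a ↦ [a ∉ P]` is a surjection of `R`
onto the Boolean semifield `𝔹`, and then `R[X]` surjects onto `𝔹[X]`. Quotients of c-Noetherian
semirings are c-Noetherian, but `𝔹[X]` is not: identifying polynomials whose supports agree once
all gaps of length at most `N` are filled gives a strictly increasing chain of congruences.

Hence `1 + u = 0` for some `u`. Now `R` is a quotient of `R[X]`, and for an ideal `I` the Bourne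
congruence `x ~ y ↔ x - y ∈ I` is generated by finitely many pairs `(a, b)`; the differences
`a - b` then generate `I`.
-/

/-- The Boolean semifield `{0, 1}` with `1 + 1 = 1`. -/
def BoolSemifield : Type := Bool

namespace BoolSemifield

instance : DecidableEq BoolSemifield := instDecidableEqBool
instance : Fintype BoolSemifield := Bool.fintype
instance : Zero BoolSemifield := ⟨(false : Bool)⟩
instance : One BoolSemifield := ⟨(true : Bool)⟩
instance : Add BoolSemifield := ⟨fun a b => (a || b : Bool)⟩
instance : Mul BoolSemifield := ⟨fun a b => (a && b : Bool)⟩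

instance : CommSemiring BoolSemifield where
  add_assoc := by decide
  zero_add := by decide
  add_zero := by decide
  add_comm := by decide
  mul_assoc := by decide
  one_mul := by decide
  mul_one := by decide
  zero_mul := by decide
  mul_zero := by decide
  left_distrib := by decide
  right_distrib := by decide
  mul_comm := by decide
  nsmul := nsmulRec

end BoolSemifield

open Polynomial Pointwise

section CongruenceNoetherian

variable {A B : Type*}

def RingCon.FG [Add A] [Mul A] (c : RingCon A) : Prop :=
  ∃ s : Finset (A × A), c = ringConGen (fun a b => (a, b) ∈ s)

def IsCongruenceNoetherian (A : Type*) [Add A] [Mul A] : Prop :=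
  ∀ c : RingCon A, c.FG

def RingCon.iUnionOfMonotone [Add A] [Mul A] (θ : ℕ → RingCon A) (hθ : Monotone θ) :
    RingCon A where
  r x y := ∃ n, θ n x y
  iseqv := by
    refine ⟨fun x => ⟨0, (θ 0).refl x⟩, fun ⟨n, h⟩ => ⟨n, (θ n).symm h⟩, ?_⟩
    rintro x y z ⟨m, hm⟩ ⟨n, hn⟩
    exact ⟨max m n, (θ _).trans (hθ (le_max_left m n) hm) (hθ (le_max_right m n) hn)⟩
  add' := by
    rintro w x y z ⟨m, hm⟩ ⟨n, hn⟩
    exact ⟨max m n, (θ _).add (hθ (le_max_left m n) hm) (hθ (le_max_right m n) hn)⟩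
  mul' := by
    rintro w x y z ⟨m, hm⟩ ⟨n, hn⟩
    exact ⟨max m n, (θ _).mul (hθ (le_max_left m n) hm) (hθ (le_max_right m n) hn)⟩

theorem IsCongruenceNoetherian.exists_forall_le [Add A] [Mul A] (hA : IsCongruenceNoetherian A)
    (θ : ℕ → RingCon A) (hθ : Monotone θ) : ∃ N, ∀ n, θ n ≤ θ N := by
  classical
  obtain ⟨s, hs⟩ := hA (RingCon.iUnionOfMonotone θ hθ)
  have hgen : ∀ p ∈ s, ∃ n, θ n p.1 p.2 := fun p hp => by
    change RingCon.iUnionOfMonotone θ hθ p.1 p.2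
    rw [hs]
    exact RingConGen.Rel.of _ _ hp
  choose level hlevel using hgen
  refine ⟨s.attach.sup fun p => level p.1 p.2, fun n x y hxy => ?_⟩
  have hle : ringConGen (fun a b => (a, b) ∈ s) ≤ θ (s.attach.sup fun p => level p.1 p.2) :=
    RingCon.ringConGen_le.2 fun a b hab =>
      hθ (Finset.le_sup (f := fun p => level p.1 p.2) (s.mem_attach ⟨(a, b), hab⟩)) (hlevel _ hab)
  rw [← hs] at hle
  exact hle ⟨n, hxy⟩

theorem IsCongruenceNoetherian.of_surjective [NonAssocSemiring A] [NonAssocSemiring B]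
    (hA : IsCongruenceNoetherian A) (f : A →+* B) (hf : Function.Surjective f) :
    IsCongruenceNoetherian B := by
  classical
  intro c
  obtain ⟨s, hs⟩ := hA (c.comap f)
  refine ⟨s.image (Prod.map f f), le_antisymm (fun x y hxy => ?_) (RingCon.ringConGen_le.2 ?_)⟩
  · obtain ⟨a, rfl⟩ := hf x
    obtain ⟨b, rfl⟩ := hf y
    have hgen : ringConGen (fun a b => (a, b) ∈ s) ≤
        (ringConGen (fun a b => (a, b) ∈ s.image (Prod.map f f))).comap f :=
      RingCon.ringConGen_le.2 fun a b hab =>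
        RingConGen.Rel.of _ _ (Finset.mem_image_of_mem (Prod.map f f) hab)
    rw [← hs] at hgen
    exact hgen hxy
  · intro x y hxy
    obtain ⟨⟨a, b⟩, hab, he⟩ := Finset.mem_image.1 hxy
    obtain ⟨rfl, rfl⟩ := Prod.ext_iff.1 he
    show c.comap f a b
    rw [hs]
    exact RingConGen.Rel.of _ _ hab

end CongruenceNoetherian

/-- Iterating `fill` fills every gap of length at most `N` in `A`. -/
inductive GapClosure (N : ℕ) (A : Set ℕ) : Set ℕ
  | mem {m : ℕ} : m ∈ A → GapClosure N A m
  | fill {m k : ℕ} : 0 < k → k ≤ N → GapClosure N A m → GapClosure N A (m + k) →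
      GapClosure N A (m + 1)

namespace GapClosure

variable {N : ℕ} {A B C D : Set ℕ}

theorem self_subset : A ⊆ GapClosure N A := fun _ => mem

theorem minimal (h : A ⊆ GapClosure N B) : GapClosure N A ⊆ GapClosure N B := by
  intro m hm
  induction hm with
  | mem ha => exact h ha
  | fill hk hkN _ _ ih₁ ih₂ => exact fill hk hkN ih₁ ih₂

theorem subset_iff : GapClosure N A ⊆ GapClosure N B ↔ A ⊆ GapClosure N B :=
  ⟨self_subset.trans, minimal⟩

theorem mono (h : A ⊆ B) : GapClosure N A ⊆ GapClosure N B :=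
  minimal (h.trans self_subset)

theorem mono_left {M : ℕ} (hMN : M ≤ N) : GapClosure M A ⊆ GapClosure N A := by
  intro m hm
  induction hm with
  | mem ha => exact mem ha
  | fill hk hkM _ _ ih₁ ih₂ => exact fill hk (hkM.trans hMN) ih₁ ih₂

theorem add_mem_add {m n : ℕ} (hm : m ∈ GapClosure N A) (hn : n ∈ GapClosure N B) :
    m + n ∈ GapClosure N (A + B) := by
  induction hm generalizing n with
  | mem ha =>
    induction hn with
    | mem hb => exact mem (Set.add_mem_add ha hb)
    | fill hk hkN _ _ ih₁ ih₂ =>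
      rw [← add_assoc] at ih₂ ⊢
      exact fill hk hkN ih₁ ih₂
  | fill hk hkN _ _ ih₁ ih₂ =>
    have := ih₂ hn
    rw [add_right_comm] at this ⊢
    exact fill hk hkN (ih₁ hn) this

theorem union_subset_union (hAB : GapClosure N A ⊆ GapClosure N B)
    (hCD : GapClosure N C ⊆ GapClosure N D) : GapClosure N (A ∪ C) ⊆ GapClosure N (B ∪ D) :=
  subset_iff.2 <| Set.union_subset
    (subset_iff.1 (hAB.trans (mono Set.subset_union_left)))
    (subset_iff.1 (hCD.trans (mono Set.subset_union_right)))

theorem add_subset_add (hAB : GapClosure N A ⊆ GapClosure N B)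
    (hCD : GapClosure N C ⊆ GapClosure N D) : GapClosure N (A + C) ⊆ GapClosure N (B + D) := by
  refine subset_iff.2 ?_
  rintro _ ⟨a, ha, c, hc, rfl⟩
  exact add_mem_add (hAB (mem ha)) (hCD (mem hc))

theorem pair_eq (n : ℕ) : GapClosure n {0, n + 2} = {0, n + 2} := by
  refine subset_antisymm (fun m hm => ?_) self_subset
  induction hm with
  | mem h => exact h
  | fill hk hkn _ _ ih₁ ih₂ =>
    simp only [Set.mem_insert_iff, Set.mem_singleton_iff] at ih₁ ih₂
    omega

end GapClosure

namespace BoolSemifield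

instance : Nontrivial BoolSemifield := ⟨⟨0, 1, by decide⟩⟩

theorem add_eq_zero_iff : ∀ a b : BoolSemifield, a + b = 0 ↔ a = 0 ∧ b = 0 := by decide

theorem mul_ne_zero_iff : ∀ a b : BoolSemifield, a * b ≠ 0 ↔ a ≠ 0 ∧ b ≠ 0 := by decide

theorem sum_eq_zero_iff {ι : Type*} (s : Finset ι) (f : ι → BoolSemifield) :
    ∑ i ∈ s, f i = 0 ↔ ∀ i ∈ s, f i = 0 := by
  classical
  induction s using Finset.induction_on with
  | empty => simp
  | insert a t ha ih => rw [Finset.sum_insert ha, add_eq_zero_iff, ih, Finset.forall_mem_insert]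

theorem support_add (f g : BoolSemifield[X]) : (f + g).support = f.support ∪ g.support := by
  ext n
  simp only [Finset.mem_union, mem_support_iff, coeff_add, ne_eq, add_eq_zero_iff]
  tauto

theorem support_mul (f g : BoolSemifield[X]) : (f * g).support = f.support + g.support := by
  ext n
  simp only [Finset.mem_add, mem_support_iff, coeff_mul, ne_eq, sum_eq_zero_iff, not_forall,
    Finset.HasAntidiagonal.mem_antidiagonal, exists_prop, Prod.exists]
  constructor
  · rintro ⟨a, b, rfl, hab⟩
    exact ⟨a, ((mul_ne_zero_iff _ _).1 hab).1, b, ((mul_ne_zero_iff _ _).1 hab).2, rfl⟩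
  · rintro ⟨a, ha, b, hb, rfl⟩
    exact ⟨a, b, rfl, (mul_ne_zero_iff _ _).2 ⟨ha, hb⟩⟩

end BoolSemifield

def gapCon (N : ℕ) : RingCon BoolSemifield[X] where
  r f g := GapClosure N f.support = GapClosure N g.support
  iseqv := ⟨fun _ => rfl, Eq.symm, Eq.trans⟩
  add' {f g f' g'} h h' := by
    simp only [BoolSemifield.support_add, Finset.coe_union]
    exact (GapClosure.union_subset_union h.le h'.le).antisymm
      (GapClosure.union_subset_union h.ge h'.ge)
  mul' {f g f' g'} h h' := by
    simp only [BoolSemifield.support_mul, Finset.coe_add]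
    exact (GapClosure.add_subset_add h.le h'.le).antisymm
      (GapClosure.add_subset_add h.ge h'.ge)

theorem gapCon_mono : Monotone gapCon := by
  intro M N hMN f g (h : GapClosure M f.support = GapClosure M g.support)
  have key : ∀ {A B : Set ℕ}, GapClosure M A = GapClosure M B →
      GapClosure N A ⊆ GapClosure N B := fun hAB =>
    GapClosure.subset_iff.2 <| GapClosure.self_subset.trans <|
      hAB.le.trans (GapClosure.mono_left hMN)
  exact (key h).antisymm (key h.symm)

theorem support_one_add_X_pow (n : ℕ) :
    ((1 + X ^ (n + 2) : BoolSemifield[X]).support : Set ℕ) = {0, n + 2} := by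
  rw [BoolSemifield.support_add, ← C_1, support_C one_ne_zero, support_X_pow]
  simp [Set.pair_comm]

theorem support_one_add_X_add_X_pow (n : ℕ) :
    ((1 + X + X ^ (n + 2) : BoolSemifield[X]).support : Set ℕ) = {0, 1, n + 2} := by
  rw [BoolSemifield.support_add, BoolSemifield.support_add, ← C_1,
    support_C one_ne_zero, support_X, support_X_pow]
  ext; simp

theorem gapCon_one_add_X_pow (n : ℕ) :
    gapCon (n + 2) (1 + X ^ (n + 2)) (1 + X + X ^ (n + 2)) := by
  change GapClosure _ _ = GapClosure _ _
  rw [support_one_add_X_pow, support_one_add_X_add_X_pow]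
  have h1 : 1 ∈ GapClosure (n + 2) {0, n + 2} :=
    GapClosure.fill (m := 0) (by omega) le_rfl (.mem (by simp)) (.mem (by simp))
  refine (GapClosure.mono (by simp [Set.insert_subset_iff])).antisymm
    (GapClosure.subset_iff.2 (Set.insert_subset (.mem (by simp)) (Set.insert_subset h1 ?_)))
  exact Set.singleton_subset_iff.2 (.mem (by simp))

theorem not_gapCon_one_add_X_pow (n : ℕ) :
    ¬ gapCon n (1 + X ^ (n + 2)) (1 + X + X ^ (n + 2)) := by
  intro h
  change GapClosure _ _ = GapClosure _ _ at h
  rw [support_one_add_X_pow, support_one_add_X_add_X_pow, GapClosure.pair_eq] at h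
  have : 1 ∈ ({0, n + 2} : Set ℕ) := h ▸ GapClosure.mem (by simp)
  simp at this

theorem not_isCongruenceNoetherian_polynomial_boolSemifield :
    ¬ IsCongruenceNoetherian BoolSemifield[X] := fun h => by
  obtain ⟨N, hN⟩ := h.exists_forall_le gapCon gapCon_mono
  exact not_gapCon_one_add_X_pow N (hN (N + 2) (gapCon_one_add_X_pow N))

section BorgerGrinberg

def oneAddSubmonoid (R : Type*) [CommSemiring R] : Submonoid R where
  carrier := {a | ∃ x, a = 1 + x}
  one_mem' := ⟨0, (add_zero 1).symm⟩
  mul_mem' := by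
    rintro _ _ ⟨x, rfl⟩ ⟨y, rfl⟩
    exact ⟨x + y + x * y, by ring⟩

variable {R : Type*} [CommSemiring R]

theorem Ideal.exists_maximal_disjoint (S : Submonoid R) {I : Ideal R}
    (hI : Disjoint (I : Set R) S) :
    ∃ P : Ideal R, Maximal (fun J : Ideal R => Disjoint (J : Set R) S) P := by
  refine (zorn_le_nonempty₀ {J : Ideal R | Disjoint (J : Set R) S}
    (fun c hc hchain J hJ => ?_) I hI).imp fun _ hP => hP.2
  refine ⟨sSup c, Set.disjoint_left.2 fun x hx => ?_, fun _ => le_sSup⟩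
  have : Nonempty c := ⟨⟨J, hJ⟩⟩
  obtain ⟨K, hK⟩ := (Submodule.mem_iSup_of_directed _ hchain.directed).1 (sSup_eq_iSup' c ▸ hx)
  exact Set.disjoint_left.1 (hc K.2) hK

theorem Ideal.mem_of_add_mem_of_maximal_disjoint_oneAdd {P : Ideal R}
    (hP : Maximal (fun J : Ideal R => Disjoint (J : Set R) (oneAddSubmonoid R)) P) {a b : R}
    (hab : a + b ∈ P) : a ∈ P := by
  by_contra ha
  have hlt : P < P ⊔ Ideal.span {a} := Submodule.lt_sup_iff_notMem.2 ha
  obtain ⟨s, hsJ, x, rfl⟩ := Set.not_disjoint_iff.1 (hP.not_prop_of_gt hlt)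
  obtain ⟨p, hp, _, hra, hs⟩ := Submodule.mem_sup.1 hsJ
  obtain ⟨r, rfl⟩ := Ideal.mem_span_singleton'.1 hra
  -- `1 + (x + r b) = p + r (a + b)` lies in both `P` and `1 + R`
  refine Set.disjoint_left.1 hP.prop
    (P.add_mem hp (P.mul_mem_left r hab)) ⟨x + r * b, ?_⟩
  rw [← add_assoc, ← hs]
  ring

theorem exists_surjective_boolSemifield (h : ¬ ∃ u : R, 1 + u = 0) :
    ∃ φ : R →+* BoolSemifield, Function.Surjective φ := by
  classical
  have hbot : Disjoint ((⊥ : Ideal R) : Set R) (oneAddSubmonoid R) := by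
    refine Set.disjoint_left.2 fun a ha ⟨u, hu⟩ => h ⟨u, ?_⟩
    rw [← hu]
    exact ha
  obtain ⟨P, hP⟩ := Ideal.exists_maximal_disjoint _ hbot
  have hprime : P.IsPrime :=
    Ideal.isPrime_of_maximally_disjoint P _ hP.prop fun J hJ => hP.not_prop_of_gt hJ
  have hadd : ∀ a b, a + b ∈ P ↔ a ∈ P ∧ b ∈ P := fun a b =>
    ⟨fun hab => ⟨Ideal.mem_of_add_mem_of_maximal_disjoint_oneAdd hP hab,
      Ideal.mem_of_add_mem_of_maximal_disjoint_oneAdd hP (add_comm a b ▸ hab)⟩,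
      fun hab => P.add_mem hab.1 hab.2⟩
  let φ : R →+* BoolSemifield :=
    { toFun := fun a => (decide (a ∉ P) : Bool)
      map_one' := by simp [hprime.ne_top, ← Ideal.eq_top_iff_one]; rfl
      map_zero' := by simp [P.zero_mem]; rfl
      map_add' := fun a b => by
        show decide _ = (decide _ || decide _)
        simp [hadd]
      map_mul' := fun a b => by
        show decide _ = (decide _ && decide _)
        simp [hprime.mul_mem_iff_mem_or_mem, not_or] }
  refine ⟨φ, fun b => ?_⟩
  cases b
  · exact ⟨0, map_zero φ⟩
  · exact ⟨1, map_one φ⟩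

end BorgerGrinberg

namespace Ideal

variable {R : Type*} [CommSemiring R]

def bourneCon (I : Ideal R) : RingCon R where
  r x y := ∃ u ∈ I, ∃ v ∈ I, x + u = y + v
  iseqv := by
    refine ⟨fun x => ⟨0, I.zero_mem, 0, I.zero_mem, rfl⟩,
      fun ⟨u, hu, v, hv, h⟩ => ⟨v, hv, u, hu, h.symm⟩, ?_⟩
    rintro x y z ⟨u, hu, v, hv, h⟩ ⟨u', hu', v', hv', h'⟩
    refine ⟨u + u', I.add_mem hu hu', v' + v, I.add_mem hv' hv, ?_⟩
    rw [← add_assoc, h, add_right_comm, h']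
    ring
  add' := by
    rintro w x y z ⟨u, hu, v, hv, h⟩ ⟨u', hu', v', hv', h'⟩
    refine ⟨u + u', I.add_mem hu hu', v + v', I.add_mem hv hv', ?_⟩
    rw [add_add_add_comm, h, h', add_add_add_comm]
  mul' := by
    rintro w x y z ⟨u, hu, v, hv, h⟩ ⟨u', hu', v', hv', h'⟩
    refine ⟨w * u' + u * y + u * u', ?_, x * v' + v * z + v * v', ?_, ?_⟩
    · exact I.add_mem (I.add_mem (I.mul_mem_left _ hu') (I.mul_mem_right _ hu))
        (I.mul_mem_left _ hu')
    · exact I.add_mem (I.add_mem (I.mul_mem_left _ hv') (I.mul_mem_right _ hv))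
        (I.mul_mem_left _ hv')
    · calc w * y + (w * u' + u * y + u * u') = (w + u) * (y + u') := by ring
        _ = (x + v) * (z + v') := by rw [h, h']
        _ = x * z + (x * v' + v * z + v * v') := by ring

theorem bourneCon_iff {u : R} (hu : 1 + u = 0) (I : Ideal R) {x y : R} :
    I.bourneCon x y ↔ x + u * y ∈ I := by
  constructor
  · rintro ⟨i, hi, j, hj, h⟩
    have : x + u * y = j + u * i :=
      calc x + u * y = x + u * y + (1 + u) * i := by rw [hu, zero_mul, add_zero]
        _ = (x + i) + u * y + u * i := by ring
        _ = (1 + u) * y + j + u * i := by rw [h]; ring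
        _ = j + u * i := by rw [hu, zero_mul, zero_add]
    exact this ▸ I.add_mem hj (I.mul_mem_left u hi)
  · intro h
    refine ⟨0, I.zero_mem, _, h, ?_⟩
    calc x + 0 = x + (1 + u) * y := by rw [hu, zero_mul]
      _ = y + (x + u * y) := by ring

theorem fg_of_isCongruenceNoetherian (hR : IsCongruenceNoetherian R) {u : R} (hu : 1 + u = 0)
    (I : Ideal R) : I.FG := by
  classical
  obtain ⟨s, hs⟩ := hR I.bourneCon
  refine ⟨s.image fun p => p.1 + u * p.2, le_antisymm ?_ fun x hx => ?_⟩
  · refine Ideal.span_le.2 fun a ha => ?_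
    obtain ⟨⟨x, y⟩, hxy, rfl⟩ := Finset.mem_image.1 (Finset.mem_coe.1 ha)
    have : I.bourneCon x y := hs ▸ RingConGen.Rel.of _ _ hxy
    exact (bourneCon_iff hu I).1 this
  · set J := Ideal.span ((s.image fun p => p.1 + u * p.2 : Finset R) : Set R)
    have hle : I.bourneCon ≤ J.bourneCon :=
      hs ▸ RingCon.ringConGen_le.2 fun a b hab => (bourneCon_iff hu J).2 <|
        Ideal.subset_span (Finset.mem_image_of_mem (fun p : R × R => p.1 + u * p.2) hab)
    have hx0 : I.bourneCon x 0 := (bourneCon_iff hu I).2 (by rwa [mul_zero, add_zero])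
    simpa using (bourneCon_iff hu J).1 (hle hx0)

end Ideal

/-- If the polynomial semiring `R[X]` over a commutative semiring `R` is
c-Noetherian, then `R` is a ring, and moreover a Noetherian ring. -/
theorem stmt_12 {R : Type*} [CommSemiring R]
    (h : ∀ c : RingCon (Polynomial R), ∃ s : Finset (Polynomial R × Polynomial R),
      c = ringConGen (fun a b => (a, b) ∈ s)) :
    (∀ x : R, ∃ y : R, x + y = 0) ∧ (∀ I : Ideal R, I.FG) := by
  have hRX : IsCongruenceNoetherian R[X] := h
  obtain ⟨u, hu⟩ : ∃ u : R, 1 + u = 0 := by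
    by_contra hR
    obtain ⟨φ, hφ⟩ := exists_surjective_boolSemifield hR
    exact not_isCongruenceNoetherian_polynomial_boolSemifield <|
      hRX.of_surjective (mapRingHom φ) (map_surjective φ hφ)
  have hR : IsCongruenceNoetherian R :=
    hRX.of_surjective constantCoeff fun a => ⟨C a, coeff_C_zero⟩
  refine ⟨fun x => ⟨u * x, ?_⟩, Ideal.fg_of_isCongruenceNoetherian hR hu⟩
  rw [← one_add_mul, hu, zero_mul]
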